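/- arXiv:1707.09833 — 8 statements merged into one kernel-verified Lean document; each statement's English description precedes it below -/
import Mathlib

section
/- Let α > 0, β > 1, d ≥ 0 with αd < 1, and set s_∞ = (2β - 1 - 2√((β-1)(β-αd)))/α and f_∞(s) = (-(1+αs) + √(1 + 2αs + α^2 s^2 - 4αd + 4αβd - 4αβs))/2. Then for all s ∈ [d, s_∞], f_∞(s) ≥ f_∞(s_∞) = √((β-1)(β-αd)) - β > -1. -/
noncomputable def fInf (α β d s : ℝ) : ℝ :=
  (-(1 + α * s) +
    Real.sqrt (1 + 2 * α * s + α ^ 2 * s ^ 2 - 4 * α * d + 4 * α * β * d - 4 * α * β * s)) / 2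

theorem stmt_5 (α β d : ℝ) (hα : 0 < α) (hβ : 1 < β) (hd : 0 ≤ d) (hαd : α * d < 1) :
    let sinf := (2 * β - 1 - 2 * Real.sqrt ((β - 1) * (β - α * d))) / α
    (∀ s ∈ Set.Icc d sinf, fInf α β d sinf ≤ fInf α β d s) ∧
    fInf α β d sinf = Real.sqrt ((β - 1) * (β - α * d)) - β ∧
    (-1 : ℝ) < Real.sqrt ((β - 1) * (β - α * d)) - β := by
  intro sinf
  set R := Real.sqrt ((β - 1) * (β - α * d)) with hRdef
  have hprod : 0 ≤ (β - 1) * (β - α * d) := by nlinarith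
  have hR2 : R ^ 2 = (β - 1) * (β - α * d) := Real.sq_sqrt hprod
  have hR0 : 0 ≤ R := Real.sqrt_nonneg _
  have hαs : α * sinf = 2 * β - 1 - 2 * R := by
    show α * ((2 * β - 1 - 2 * R) / α) = _
    field_simp
  have hDsinf : 1 + 2 * α * sinf + α ^ 2 * sinf ^ 2 - 4 * α * d + 4 * α * β * d
      - 4 * α * β * sinf = 0 := by
    have h2 : α ^ 2 * sinf ^ 2 = (2 * β - 1 - 2 * R) ^ 2 := by
      rw [← hαs]; ring
    nlinarith [hαs, h2, hR2]
  have hval : fInf α β d sinf = R - β := by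
    unfold fInf
    rw [hDsinf, Real.sqrt_zero, hαs]
    ring
  refine ⟨?_, hval, ?_⟩
  · intro s hs
    rw [hval]
    have hs2 : s ≤ sinf := hs.2
    have hmul : α * s ≤ α * sinf := by
      exact mul_le_mul_of_nonneg_left hs2 hα.le
    have h1 : R - β ≤ (-(1 + α * s)) / 2 := by
      rw [hαs] at hmul; linarith
    have h2 : (-(1 + α * s)) / 2 ≤ fInf α β d s := by
      unfold fInf
      have := Real.sqrt_nonneg
        (1 + 2 * α * s + α ^ 2 * s ^ 2 - 4 * α * d + 4 * α * β * d - 4 * α * β * s)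
      linarith
    linarith
  · nlinarith [hR2, hR0]
end

section
/- Let α > 0, β > 1, d ≥ 0 with αd < 1. Define f_1(s) = -αs and recursively f_{i+1}(s) = F(s, f_i(s)) with F(s,x) = α(-d + βd - βs - dx)/(1 + x + αs - αd), wherever defined. Then for every i ≥ 1, f_i is continuous and strictly decreasing on its domain, f_i(d) = -αd, and for all s in (d, s_i] one has f_{i+1}(s) < f_i(s), where s_i is the unique solution of f_i(s) = -1. -/
noncomputable def Fmap (α β d s x : ℝ) : ℝ :=
  α * (-d + β * d - β * s - d * x) / (1 + x + α * s - α * d)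

/-- `fseq α β d (i-1)` is the function `f_i` of the paper: `f_1 s = -α s`,
`f_{i+1} s = F(s, f_i s)`. -/
noncomputable def fseq (α β d : ℝ) : ℕ → ℝ → ℝ
  | 0 => fun t => -α * t
  | (i + 1) => fun t => Fmap α β d t (fseq α β d i t)

/-- The sequence of thresholds: `sseq α β d i = s_i`, with `s_0` a junk value. -/
noncomputable def sseq (α β d : ℝ) : ℕ → ℝ
  | 0 => 0
  | 1 => 1 / α
  | (n + 2) => sInf {t | t ∈ Set.Icc d (sseq α β d (n + 1)) ∧ fseq α β d (n + 1) t = -1}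

lemma base_lt {α β d t : ℝ} (hα : 0 < α) (hβ : 1 < β) (hαd : α * d < 1)
    (ht : d < t) : Fmap α β d t (-α * t) < -α * t := by
  have hden : (0:ℝ) < 1 + -α * t + α * t - α * d := by linarith
  rw [Fmap, div_lt_iff₀ hden]
  nlinarith [mul_pos (mul_pos hα (sub_pos.2 ht)) (sub_pos.2 hβ)]

/-- `Fmap` is strictly increasing in its last argument (for `t > d`). -/
lemma Fmap_mono {α β d t x x' : ℝ} (hα : 0 < α) (hβαd : α * d < β)
    (ht : d < t) (hx' : -1 ≤ x') (hxx : x' < x) :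
    Fmap α β d t x' < Fmap α β d t x := by
  have h1 : (0:ℝ) < 1 + x' + α * t - α * d := by nlinarith
  have h2 : (0:ℝ) < 1 + x + α * t - α * d := by linarith
  rw [Fmap, Fmap, div_lt_div_iff₀ h1 h2]
  nlinarith [mul_pos (mul_pos (mul_pos hα (sub_pos.2 ht)) (sub_pos.2 hβαd))
    (sub_pos.2 hxx)]

/-- joint strict antitonicity of `Fmap`. -/
lemma Fmap_anti {α β d t1 t2 x1 x2 : ℝ} (hα : 0 < α) (hβαd : α * d < β)
    (ht1 : d ≤ t1) (ht : t1 < t2) (hx2 : -1 ≤ x2) (hx : x2 < x1) :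
    Fmap α β d t2 x2 < Fmap α β d t1 x1 := by
  have h1 : (0:ℝ) < 1 + x1 + α * t1 - α * d := by nlinarith
  have h2 : (0:ℝ) < 1 + x2 + α * t2 - α * d := by nlinarith
  rw [Fmap, Fmap, div_lt_div_iff₀ h2 h1]
  have hC : (0:ℝ) < α * (β - α * d) := mul_pos hα (sub_pos.2 hβαd)
  have key : (t1 - d) * (1 + x2) < (t2 - d) * (1 + x1) := by nlinarith
  nlinarith [mul_lt_mul_of_pos_left key hC]

lemma key_lemma (α β d : ℝ) (hα : 0 < α) (hβ : 1 < β) (hd : 0 ≤ d) (hαd : α * d < 1) :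
    ∀ n : ℕ, ∀ D : Set ℝ, D = (if n = 0 then Set.Ici d else Set.Icc d (sseq α β d n)) →
      ContinuousOn (fseq α β d n) D ∧
      StrictAntiOn (fseq α β d n) D ∧
      fseq α β d n d = -(α * d) ∧
      d < sseq α β d (n + 1) ∧
      sseq α β d (n + 1) ∈ D ∧
      fseq α β d n (sseq α β d (n + 1)) = -1 ∧
      (∀ t ∈ D, fseq α β d n t = -1 → t = sseq α β d (n + 1)) ∧
      (∀ t ∈ Set.Ioc d (sseq α β d (n + 1)),
        fseq α β d (n + 1) t < fseq α β d n t) := by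
  have hβαd : α * d < β := lt_trans hαd hβ
  intro n
  induction n with
  | zero =>
    intro D hD
    rw [if_pos rfl] at hD; subst hD
    have hs1 : sseq α β d 1 = 1 / α := rfl
    have hd1 : d < sseq α β d 1 := by
      rw [hs1, lt_div_iff₀ hα]; nlinarith
    refine ⟨?_, ?_, ?_, hd1, le_of_lt hd1, ?_, ?_, ?_⟩
    · show ContinuousOn (fun t => -α * t) (Set.Ici d)
      exact (continuous_const.mul continuous_id).continuousOn
    · intro a _ b _ hab
      show -α * b < -α * a
      nlinarith
    · show -α * d = -(α * d); ring
    · show -α * (1 / α) = -1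
      field_simp
    · intro t _ h
      have h' : -α * t = -1 := h
      rw [hs1]
      field_simp
      nlinarith
    · intro t ht
      rw [hs1] at ht
      show Fmap α β d t (-α * t) < -α * t
      exact base_lt hα hβ hαd ht.1
  | succ n ih =>
    intro D hD
    rw [if_neg (Nat.succ_ne_zero n)] at hD
    obtain ⟨hcont, hanti, hfd, hds', hs'mem, hfs', _, hlt⟩ := ih _ rfl
    set s' := sseq α β d (n + 1) with hs'def
    set f := fseq α β d n with hfdef
    set Dn := (if n = 0 then Set.Ici d else Set.Icc d (sseq α β d n)) with hDn
    -- the new domain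
    have hsub : Set.Icc d s' ⊆ Dn := by
      intro t ht
      by_cases h0 : n = 0
      · rw [hDn, if_pos h0]; exact ht.1
      · rw [hDn, if_neg h0]
        rw [hDn, if_neg h0] at hs'mem
        exact ⟨ht.1, le_trans ht.2 hs'mem.2⟩
    have hge : ∀ t ∈ Set.Icc d s', -1 ≤ f t := by
      intro t ht
      rcases eq_or_lt_of_le ht.2 with h | h
      · rw [h, hfs']
      · have h2 := hanti (hsub ht) hs'mem h
        rw [hfs'] at h2; linarith
    have hdenpos : ∀ t ∈ Set.Icc d s', 0 < 1 + f t + α * t - α * d := by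
      intro t ht
      rcases eq_or_lt_of_le ht.1 with h | h
      · rw [← h, hfd]; linarith
      · have h1 := hge t ht
        have h2 : 0 < α * (t - d) := mul_pos hα (sub_pos.2 h)
        nlinarith
    have hcont' : ContinuousOn f (Set.Icc d s') := hcont.mono hsub
    -- continuity of f_{n+2}
    have heq : fseq α β d (n + 1) = fun t =>
        (α * (-d + β * d - β * t - d * f t)) / (1 + f t + α * t - α * d) := rfl
    have hgcont : ContinuousOn (fseq α β d (n + 1)) (Set.Icc d s') := by
      rw [heq]
      apply ContinuousOn.div
      · exact continuousOn_const.mul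
          ((continuousOn_const.sub (continuousOn_const.mul continuousOn_id)).sub
            (continuousOn_const.mul hcont'))
      · exact ((continuousOn_const.add hcont').add
          (continuousOn_const.mul continuousOn_id)).sub continuousOn_const
      · intro t ht; exact ne_of_gt (hdenpos t ht)
    -- strict antitonicity of f_{n+2}
    have hganti : StrictAntiOn (fseq α β d (n + 1)) (Set.Icc d s') := by
      intro a ha b hb hab
      have h1 : f b < f a := hanti (hsub ha) (hsub hb) hab
      have h2 : -1 ≤ f b := hge b hb
      show Fmap α β d b (f b) < Fmap α β d a (f a)
      exact Fmap_anti hα hβαd ha.1 hab h2 h1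
    -- value at d
    have hgd : fseq α β d (n + 1) d = -(α * d) := by
      show Fmap α β d d (f d) = -(α * d)
      rw [hfd, Fmap, div_eq_iff (by intro h; simp at h; nlinarith :
        (1 + -(α * d) + α * d - α * d) ≠ 0)]
      ring
    -- value at s' is < -1
    have hgs' : fseq α β d (n + 1) s' < -1 := by
      have := hlt s' ⟨hds', le_refl s'⟩
      rw [hfs'] at this; exact this
    -- intermediate value
    obtain ⟨t0, ht0mem, ht0eq⟩ :=
      intermediate_value_Icc' (le_of_lt hds') hgcont
        (Set.mem_Icc.2 ⟨le_of_lt hgs', by rw [hgd]; linarith⟩)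
    have huniq : ∀ t ∈ Set.Icc d s', fseq α β d (n + 1) t = -1 → t = t0 := by
      intro t ht h
      exact hganti.injOn ht ht0mem (h.trans ht0eq.symm)
    -- identify sseq (n+2)
    have hset : {t | t ∈ Set.Icc d s' ∧ fseq α β d (n + 1) t = -1} = {t0} := by
      ext t
      simp only [Set.mem_setOf_eq, Set.mem_singleton_iff]
      constructor
      · rintro ⟨h1, h2⟩; exact huniq t h1 h2
      · rintro rfl; exact ⟨ht0mem, ht0eq⟩
    have hs2 : sseq α β d (n + 2) = t0 := by
      show sInf {t | t ∈ Set.Icc d (sseq α β d (n + 1)) ∧ fseq α β d (n + 1) t = -1} = t0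
      rw [← hs'def, hset, csInf_singleton]
    have hdt0 : d < t0 := by
      rcases eq_or_lt_of_le ht0mem.1 with h | h
      · exfalso; rw [← h] at ht0eq; rw [hgd] at ht0eq; linarith
      · exact h
    subst hD
    refine ⟨hgcont, hganti, hgd, ?_, ?_, ?_, ?_, ?_⟩
    · rw [hs2]; exact hdt0
    · rw [hs2]; exact ht0mem
    · rw [hs2]; exact ht0eq
    · intro t ht h; rw [hs2]; exact huniq t ht h
    · -- f_{n+3} < f_{n+2} on (d, s_{n+2}]
      intro t ht
      rw [hs2] at ht
      have htmem : t ∈ Set.Icc d s' := ⟨le_of_lt ht.1, le_trans ht.2 ht0mem.2⟩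
      have hg1 : -1 ≤ fseq α β d (n + 1) t := by
        rcases eq_or_lt_of_le ht.2 with h | h
        · rw [h, ht0eq]
        · have := hganti htmem ht0mem h
          rw [ht0eq] at this; linarith
      have hg2 : fseq α β d (n + 1) t < f t :=
        hlt t ⟨ht.1, le_trans ht.2 ht0mem.2⟩
      show Fmap α β d t (fseq α β d (n + 1) t) < fseq α β d (n + 1) t
      calc Fmap α β d t (fseq α β d (n + 1) t) < Fmap α β d t (f t) :=
            Fmap_mono hα hβαd ht.1 hg1 hg2
        _ = fseq α β d (n + 1) t := rfl

theorem stmt_6 (α β d : ℝ) (hα : 0 < α) (hβ : 1 < β) (hd : 0 ≤ d) (hαd : α * d < 1) :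
    ∃ s : ℕ → ℝ, ∀ i : ℕ, 1 ≤ i →
      -- the domain of `f_i` is `[d, s_{i-1}]` with `s_0 = ∞`
      ∀ D : Set ℝ, D = (if i = 1 then Set.Ici d else Set.Icc d (s (i - 1))) →
        ContinuousOn (fseq α β d (i - 1)) D ∧
        StrictAntiOn (fseq α β d (i - 1)) D ∧
        fseq α β d (i - 1) d = -(α * d) ∧
        -- `s i` is the unique solution in the domain of `f_i t = -1`
        s i ∈ D ∧ fseq α β d (i - 1) (s i) = -1 ∧
        (∀ t ∈ D, fseq α β d (i - 1) t = -1 → t = s i) ∧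
        -- `f_{i+1} < f_i` on `(d, s_i]`
        (∀ t ∈ Set.Ioc d (s i), fseq α β d i t < fseq α β d (i - 1) t) := by
  refine ⟨sseq α β d, ?_⟩
  intro i hi D hD
  obtain ⟨n, rfl⟩ : ∃ n, i = n + 1 := ⟨i - 1, (Nat.succ_pred_eq_of_pos hi).symm⟩
  simp only [Nat.add_sub_cancel] at hD ⊢
  have hD' : D = (if n = 0 then Set.Ici d else Set.Icc d (sseq α β d n)) := by
    rw [hD]; rcases n with _ | m <;> simp
  obtain ⟨h1, h2, h3, _, h5, h6, h7, h8⟩ := key_lemma α β d hα hβ hd hαd n D hD'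
  exact ⟨h1, h2, h3, h5, h6, h7, h8⟩
end

section
/- Let α > 0, β > 1, d ≥ 0 with αd < 1, and let f_1(s) = -αs, f_{i+1}(s) = F(s, f_i(s)) as above. Then for every s ∈ [d, s_∞) with s_∞ = (2β - 1 - 2√((β-1)(β-αd)))/α, the sequence (f_i(s))_{i≥1} converges as i → ∞ to f_∞(s) = (-(1+αs) + √(1 + 2αs + α^2 s^2 - 4αd + 4αβd - 4αβs))/2, the largest fixed point of F(s,·). -/
theorem stmt_7 (α β d : ℝ) (hα : 0 < α) (hβ : 1 < β) (hd : 0 ≤ d) (hαd : α * d < 1)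
    (s : ℝ) (hs : s ∈ Set.Ico d ((2 * β - 1 - 2 * Real.sqrt ((β - 1) * (β - α * d))) / α)) :
    Filter.Tendsto (fun i => fseq α β d i s) Filter.atTop (nhds (fInf α β d s)) ∧
    Fmap α β d s (fInf α β d s) = fInf α β d s ∧
    ∀ x : ℝ, Fmap α β d s x = x → x ≤ fInf α β d s := by
  obtain ⟨hds, hlt⟩ := hs
  set r : ℝ := Real.sqrt (1 + 2 * α * s + α ^ 2 * s ^ 2 - 4 * α * d + 4 * α * β * d - 4 * α * β * s) with hrdef
  have hfe : fInf α β d s = (-(1 + α * s) + r) / 2 := rfl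
  have hq0 : 0 ≤ (β - 1) * (β - α * d) := by nlinarith
  set q : ℝ := Real.sqrt ((β - 1) * (β - α * d)) with hqdef
  have hq2 : q ^ 2 = (β - 1) * (β - α * d) := Real.sq_sqrt hq0
  have hq_nonneg : 0 ≤ q := Real.sqrt_nonneg _
  have hqge : β - 1 ≤ q := by
    have h := (Real.sqrt_sq (by linarith : (0:ℝ) ≤ β - 1)).symm
    rw [h, hqdef]
    apply Real.sqrt_le_sqrt
    nlinarith
  have hsd : α * d ≤ α * s := by nlinarith
  have h1 : s * α < 2 * β - 1 - 2 * q := (lt_div_iff₀ hα).mp hlt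
  have hαs : α * s < 1 := by nlinarith
  have hΔpos : 0 < 1 + 2 * α * s + α ^ 2 * s ^ 2 - 4 * α * d + 4 * α * β * d - 4 * α * β * s := by
    have ht : 0 < (2 * β - 1 - α * s) - 2 * q := by nlinarith
    have ht2 : 0 < (2 * β - 1 - α * s) + 2 * q := by nlinarith
    nlinarith [mul_pos ht ht2, hq2]
  have hr2 : r ^ 2 = 1 + 2 * α * s + α ^ 2 * s ^ 2 - 4 * α * d + 4 * α * β * d - 4 * α * β * s :=
    Real.sq_sqrt hΔpos.le
  have hr0 : 0 ≤ r := Real.sqrt_nonneg _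
  have hrle : r ≤ 1 - α * s := by
    rw [hrdef]
    calc Real.sqrt (1 + 2 * α * s + α ^ 2 * s ^ 2 - 4 * α * d + 4 * α * β * d - 4 * α * β * s)
        ≤ Real.sqrt ((1 - α * s) ^ 2) := by
          apply Real.sqrt_le_sqrt
          nlinarith [mul_nonneg (mul_nonneg hα.le (by linarith : (0:ℝ) ≤ s - d))
            (by linarith : (0:ℝ) ≤ β - 1)]
      _ = 1 - α * s := Real.sqrt_sq (by linarith)
  have hfle : fInf α β d s ≤ -(α * s) := by rw [hfe]; linarith
  have hroot : (fInf α β d s) ^ 2 + (1 + α * s) * fInf α β d s + α * (d - β * d + β * s) = 0 := by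
    rw [hfe]
    linear_combination hr2 / 4
  have hdenf : 0 < 1 + fInf α β d s + α * s - α * d := by
    rw [hfe]; linarith
  -- fixed point claim
  have hfix : Fmap α β d s (fInf α β d s) = fInf α β d s := by
    rw [Fmap, div_eq_iff (ne_of_gt hdenf)]
    linear_combination -hroot
  -- maximality claim
  have hmax : ∀ x : ℝ, Fmap α β d s x = x → x ≤ fInf α β d s := by
    intro x hx
    have hg : x ^ 2 + (1 + α * s) * x + α * (d - β * d + β * s) = 0 := by
      by_cases hD : 1 + x + α * s - α * d = 0
      · exfalso
        rw [Fmap, hD, div_zero] at hx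
        rw [← hx] at hD
        linarith
      · rw [Fmap, div_eq_iff hD] at hx
        linear_combination -hx
    have h2 : (2 * x + (1 + α * s)) ^ 2 = r ^ 2 := by rw [hr2]; linear_combination 4 * hg
    have h3 : 2 * x + (1 + α * s) ≤ r := by
      have h4 : (2 * x + (1 + α * s) - r) * (2 * x + (1 + α * s) + r) = 0 := by
        linear_combination h2
      by_contra hcon
      push_neg at hcon
      have hf1 : 0 < 2 * x + (1 + α * s) - r := by linarith
      have hf2 : 0 < 2 * x + (1 + α * s) + r := by linarith
      have := mul_pos hf1 hf2
      linarith
    rw [hfe]; linarith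
  -- the key step inequality
  have hstep : ∀ x : ℝ, fInf α β d s ≤ x →
      fInf α β d s ≤ Fmap α β d s x ∧ Fmap α β d s x ≤ x := by
    intro x hx
    have hD : 0 < 1 + x + α * s - α * d := by linarith
    constructor
    · rw [Fmap, le_div_iff₀ hD]
      have hp : (0:ℝ) ≤ (-(α * d + fInf α β d s)) * (x - fInf α β d s) :=
        mul_nonneg (by linarith [hfle, hsd]) (sub_nonneg.2 hx)
      have hkey : α * (-d + β * d - β * s - d * x) - fInf α β d s * (1 + x + α * s - α * d) =
          (-(α * d + fInf α β d s)) * (x - fInf α β d s) -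
          ((fInf α β d s) ^ 2 + (1 + α * s) * fInf α β d s + α * (d - β * d + β * s)) := by
        ring
      linarith [hroot, hp, hkey]
    · rw [Fmap, div_le_iff₀ hD]
      have hs2 : (0:ℝ) ≤ x + fInf α β d s + 1 + α * s := by
        rw [hfe] at hx ⊢; linarith
      have hp : (0:ℝ) ≤ (x - fInf α β d s) * (x + fInf α β d s + 1 + α * s) :=
        mul_nonneg (sub_nonneg.2 hx) hs2
      have hkey : x * (1 + x + α * s - α * d) - α * (-d + β * d - β * s - d * x) =
          (x - fInf α β d s) * (x + fInf α β d s + 1 + α * s) +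
          ((fInf α β d s) ^ 2 + (1 + α * s) * fInf α β d s + α * (d - β * d + β * s)) := by
        ring
      linarith [hroot, hp, hkey]
  -- the sequence
  set a : ℕ → ℝ := fun i => fseq α β d i s with ha
  have hasucc : ∀ i, a (i + 1) = Fmap α β d s (a i) := fun i => rfl
  have hlb : ∀ i, fInf α β d s ≤ a i := by
    intro i
    induction i with
    | zero =>
        have h0 : a 0 = -α * s := rfl
        rw [h0]; linarith [hfle]
    | succ n ih => rw [hasucc]; exact (hstep _ ih).1
  have hanti : Antitone a :=
    antitone_nat_of_succ_le (fun n => by rw [hasucc]; exact (hstep _ (hlb n)).2)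
  have hbdd : BddBelow (Set.range a) := ⟨fInf α β d s, by rintro y ⟨i, rfl⟩; exact hlb i⟩
  have hlim : Filter.Tendsto a Filter.atTop (nhds (⨅ i, a i)) := tendsto_atTop_ciInf hanti hbdd
  set l := ⨅ i, a i with hl
  have hlge : fInf α β d s ≤ l := le_ciInf hlb
  have hDl : 1 + l + α * s - α * d ≠ 0 := ne_of_gt (by linarith)
  have hcont : ContinuousAt (fun x : ℝ => Fmap α β d s x) l := by
    simp only [Fmap]
    exact ContinuousAt.div (by fun_prop) (by fun_prop) hDl
  have hT1 : Filter.Tendsto (fun i => Fmap α β d s (a i)) Filter.atTop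
      (nhds (Fmap α β d s l)) := hcont.tendsto.comp hlim
  have hT2 : Filter.Tendsto (fun i => a (i + 1)) Filter.atTop (nhds l) :=
    hlim.comp (Filter.tendsto_add_atTop_nat 1)
  have hfixl : Fmap α β d s l = l := by
    have he : (fun i => a (i + 1)) = fun i => Fmap α β d s (a i) := funext hasucc
    rw [he] at hT2
    exact tendsto_nhds_unique hT1 hT2
  have hleq : l = fInf α β d s := le_antisymm (hmax l hfixl) hlge
  exact ⟨hleq ▸ hlim, hfix, hmax⟩
end

section
/- Let α > 0, β > 1, d ≥ 0 with αd < 1. For the sequences (f_i) and (s_i) defined as above, the sequence (s_i)_{i≥1} is strictly decreasing and converges to s_∞ = (2β - 1 - 2√((β-1)(β-αd)))/α as i → ∞. -/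
set_option maxHeartbeats 1000000

private lemma sig_sq' {β A : ℝ} (hβ : 1 < β) (hβd : A < β) :
    (Real.sqrt ((β-1)*(β-A)))^2 = (β-1)*(β-A) := by
  rw [Real.sq_sqrt]; nlinarith

private lemma d_lt_sInf' {α β d : ℝ} (hα : 0 < α) (hβ : 1 < β) (hαd : α * d < 1) :
    d < (2*β - 1 - 2*Real.sqrt ((β-1)*(β-α*d)))/α := by
  have hβd : α*d < β := hαd.trans hβ
  have h2 := sig_sq' hβ hβd
  set σ := Real.sqrt ((β-1)*(β-α*d)) with hσ
  have hσ0 : 0 ≤ σ := Real.sqrt_nonneg _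
  rw [lt_div_iff₀ hα]
  nlinarith [sq_nonneg (1 - α*d), sq_nonneg σ]

private lemma descent' {α β d : ℝ} (hα : 0 < α) (hβ : 1 < β) (hd : 0 ≤ d)
    (hαd : α * d < 1) {t : ℝ}
    (hst : (2*β - 1 - 2*Real.sqrt ((β-1)*(β-α*d)))/α < t) (ht1 : α*t ≤ 1)
    (hall : ∀ k, -1 < fseq α β d k t) : False := by
  have hβd : α*d < β := hαd.trans hβ
  have hσ2 := sig_sq' hβ hβd
  have hdt : d < t := (d_lt_sInf' hα hβ hαd).trans hst
  set σ := Real.sqrt ((β-1)*(β-α*d)) with hσdef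
  have hσ0 : 0 ≤ σ := Real.sqrt_nonneg _
  have hαst : 2*β - 1 - 2*σ < α*t := by
    rw [div_lt_iff₀ hα] at hst; linarith [hst]
  set Δt := (1+α*t)^2 - 4*α*(β*t-(β-1)*d) with hΔdef
  have hΔfac : Δt = (α*t - (2*β-1-2*σ))*(α*t - (2*β-1+2*σ)) := by
    rw [hΔdef]; linear_combination 4*hσ2
  have hΔneg : Δt < 0 := by
    rw [hΔfac]
    apply mul_neg_of_pos_of_neg
    · linarith
    · nlinarith
  set M := 1 + α*(t-d) with hMdef
  have hM : 0 < M := by nlinarith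
  set c := (-Δt)/(4*M) with hcdef
  have hc : 0 < c := div_pos (by linarith) (by linarith)
  have hcM : c * M = -Δt/4 := by rw [hcdef]; field_simp
  have ht0 : 0 < α * t := by nlinarith
  have claim : ∀ k : ℕ, fseq α β d k t ≤ -(α*t) - k*c := by
    intro k
    induction k with
    | zero => show -α * t ≤ _; push_cast; linarith
    | succ k ih =>
      have hx1 : -1 < fseq α β d k t := hall k
      set x := fseq α β d k t with hxdef
      have hkc : 0 ≤ (k:ℝ)*c := mul_nonneg (Nat.cast_nonneg k) hc.le
      have hx0 : x < 0 := by linarith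
      have hD : 0 < 1 + x + α * t - α * d := by nlinarith
      have hDM : 1 + x + α * t - α * d ≤ M := by rw [hMdef]; linarith
      have hQ : -Δt/4 ≤ x^2 + (1+α*t)*x + α*(β*t-(β-1)*d) := by
        nlinarith [sq_nonneg (2*x + 1 + α*t)]
      have key : (x - Fmap α β d t x) * (1 + x + α * t - α * d) =
          x^2 + (1+α*t)*x + α*(β*t-(β-1)*d) := by
        rw [Fmap]; field_simp; ring
      have h2 : c * (1 + x + α * t - α * d) ≤
          (x - Fmap α β d t x) * (1 + x + α * t - α * d) := by
        rw [key]
        calc c * (1 + x + α * t - α * d) ≤ c * M :=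
              mul_le_mul_of_nonneg_left hDM hc.le
          _ = -Δt/4 := hcM
          _ ≤ _ := hQ
      have h3 : c ≤ x - Fmap α β d t x := le_of_mul_le_mul_right h2 hD
      show Fmap α β d t x ≤ _
      push_cast
      linarith
  obtain ⟨k, hk⟩ := exists_nat_gt ((1 - α*t)/c)
  have hk2 : 1 - α*t < k*c := by
    rw [div_lt_iff₀ hc] at hk; linarith
  have h4 := hall k
  have h5 := claim k
  linarith

theorem stmt_8 (α β d : ℝ) (hα : 0 < α) (hβ : 1 < β) (hd : 0 ≤ d) (hαd : α * d < 1)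
    (s : ℕ → ℝ)
    (hs1 : s 1 = 1 / α)
    -- `s (i+1)` is the solution in `[d, s i]` of `f_{i+1} t = -1`
    (hsrec : ∀ i : ℕ, 1 ≤ i → s (i + 1) ∈ Set.Icc d (s i) ∧ fseq α β d i (s (i + 1)) = -1) :
    (∀ i : ℕ, 1 ≤ i → s (i + 1) < s i) ∧
    Filter.Tendsto s Filter.atTop
      (nhds ((2 * β - 1 - 2 * Real.sqrt ((β - 1) * (β - α * d))) / α)) := by
  have hβd : α*d < β := hαd.trans hβ
  -- d ≤ s i for i ≥ 1
  have hd_le : ∀ i : ℕ, 1 ≤ i → d ≤ s i := by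
    intro i hi
    have h := (hsrec i hi).1
    exact h.1.trans h.2
  -- fseq j (s (j+1)) = -1 for all j
  have hneg1 : ∀ j : ℕ, fseq α β d j (s (j+1)) = -1 := by
    intro j
    cases j with
    | zero =>
      show -α * s 1 = -1
      rw [hs1]; field_simp
    | succ j => exact (hsrec (j+1) (by omega)).2
  -- strict decrease
  have hdec : ∀ i : ℕ, 1 ≤ i → s (i + 1) < s i := by
    intro i hi
    obtain ⟨j, rfl⟩ : ∃ j, i = j + 1 := ⟨i - 1, by omega⟩
    have hle : s (j+2) ≤ s (j+1) := (hsrec (j+1) hi).1.2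
    rcases lt_or_eq_of_le hle with h | h
    · exact h
    · exfalso
      have h2 : fseq α β d (j+1) (s (j+1)) = -1 := by
        have := (hsrec (j+1) hi).2
        rwa [h] at this
      have h3 : fseq α β d (j+1) (s (j+1)) = Fmap α β d (s (j+1)) (-1) := by
        show Fmap α β d (s (j+1)) (fseq α β d j (s (j+1))) = _
        rw [hneg1 j]
      rw [h3] at h2
      -- Fmap at -1 is never -1
      rcases lt_or_eq_of_le (hd_le (j+1) (by omega)) with h1 | h1
      · have hden : 1 + -1 + α * (s (j+1)) - α * d ≠ 0 := by
          have : 0 < α * (s (j+1) - d) := mul_pos hα (by linarith)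
          intro hc; nlinarith
        rw [Fmap, div_eq_iff hden] at h2
        have hpos : 0 < α * (s (j+1) - d) * (β - 1) :=
          mul_pos (mul_pos hα (by linarith)) (by linarith)
        nlinarith [h2]
      · rw [Fmap] at h2
        have hden : 1 + -1 + α * (s (j+1)) - α * d = 0 := by rw [← h1]; ring
        rw [hden, div_zero] at h2
        norm_num at h2
  refine ⟨hdec, ?_⟩
  -- notation for s∞
  have hσ2 := Real.sq_sqrt (by nlinarith : (0:ℝ) ≤ (β-1)*(β-α*d))
  set σ := Real.sqrt ((β-1)*(β-α*d)) with hσdef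
  have hσ0 : 0 ≤ σ := Real.sqrt_nonneg _
  set sI := (2 * β - 1 - 2 * σ) / α with hsIdef
  have hdsI : d < sI := by
    rw [hsIdef, lt_div_iff₀ hα]
    nlinarith [sq_nonneg (1 - α*d), sq_nonneg σ]
  have hsI1 : α * sI < 1 := by
    rw [hsIdef, mul_div_cancel₀ _ (ne_of_gt hα)]
    nlinarith [sq_nonneg (σ - (β-1))]
  -- lower bound lemma: orbit stays > -1 below s∞
  have hlow : ∀ t : ℝ, d ≤ t → t ≤ sI → ∀ k, -1 < fseq α β d k t := by
    intro t hdt hts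
    have hαt : α * t ≤ 2*β - 1 - 2*σ := by
      have := mul_le_mul_of_nonneg_left hts (le_of_lt hα)
      rwa [hsIdef, mul_div_cancel₀ _ (ne_of_gt hα)] at this
    have hαt1 : α * t < 1 := by nlinarith [sq_nonneg (σ - (β-1))]
    have hαdt : α * d ≤ α * t := mul_le_mul_of_nonneg_left hdt (le_of_lt hα)
    set Δt := (1+α*t)^2 - 4*α*(β*t-(β-1)*d) with hΔdef
    have hΔfac : Δt = (α*t - (2*β-1-2*σ))*(α*t - (2*β-1+2*σ)) := by
      rw [hΔdef]; linear_combination 4*hσ2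
    have hΔ0 : 0 ≤ Δt := by
      rw [hΔfac]
      have h1 : α*t - (2*β-1-2*σ) ≤ 0 := by linarith
      have h2 : α*t - (2*β-1+2*σ) ≤ 0 := by nlinarith
      nlinarith [mul_nonneg (neg_nonneg.mpr h1) (neg_nonneg.mpr h2)]
    set r := Real.sqrt Δt with hrdef
    have hr2 : r^2 = Δt := Real.sq_sqrt hΔ0
    have hr0 : 0 ≤ r := Real.sqrt_nonneg _
    set xp := (-(1+α*t) + r)/2 with hxpdef
    have hxp1 : -1 < xp := by rw [hxpdef]; linarith
    have hxpd : xp ≤ -(α*d) := by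
      have hR0 : 0 ≤ 1 + α*t - 2*(α*d) := by linarith
      have h1 : Δt ≤ (1 + α*t - 2*(α*d))^2 := by
        have : (1 + α*t - 2*(α*d))^2 - Δt = 4*(α*(t-d))*(β-α*d) := by
          rw [hΔdef]; ring
        nlinarith [mul_nonneg (mul_nonneg (le_of_lt hα)
          (by linarith : (0:ℝ) ≤ t - d)) (by linarith : (0:ℝ) ≤ β - α*d)]
      have h2 : r ≤ 1 + α*t - 2*(α*d) := by
        calc r ≤ Real.sqrt ((1 + α*t - 2*(α*d))^2) := Real.sqrt_le_sqrt h1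
          _ = 1 + α*t - 2*(α*d) := Real.sqrt_sq hR0
      rw [hxpdef]; linarith
    have hxpt : xp ≤ -(α*t) := by
      have hR0 : 0 ≤ 1 - α*t := by linarith
      have h1 : Δt ≤ (1 - α*t)^2 := by
        have : (1 - α*t)^2 - Δt = 4*(α*(t-d))*(β-1) := by rw [hΔdef]; ring
        nlinarith [mul_nonneg (mul_nonneg (le_of_lt hα)
          (by linarith : (0:ℝ) ≤ t - d)) (by linarith : (0:ℝ) ≤ β - 1)]
      have h2 : r ≤ 1 - α*t := by
        calc r ≤ Real.sqrt ((1 - α*t)^2) := Real.sqrt_le_sqrt h1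
          _ = 1 - α*t := Real.sqrt_sq hR0
      rw [hxpdef]; linarith
    have hQ : xp^2 + (1+α*t)*xp + α*(β*t-(β-1)*d) = 0 := by
      rw [hxpdef]; linear_combination hr2/4 + hΔdef/4
    suffices h : ∀ k, xp ≤ fseq α β d k t by
      intro k; exact lt_of_lt_of_le hxp1 (h k)
    intro k
    induction k with
    | zero => show xp ≤ -α * t; linarith
    | succ k ih =>
      show xp ≤ Fmap α β d t (fseq α β d k t)
      set x := fseq α β d k t with hxdef
      have hD : 0 < 1 + x + α * t - α * d := by nlinarith
      have key : (Fmap α β d t x - xp) * (1 + x + α * t - α * d) =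
          (x - xp)*(-(α*d) - xp) := by
        rw [Fmap]; field_simp; linear_combination -hQ
      nlinarith [mul_nonneg (sub_nonneg.mpr ih)
        (by linarith : (0:ℝ) ≤ -(α*d) - xp)]
  -- s i > s∞ for all i ≥ 1
  have hsI_lt : ∀ j : ℕ, sI < s (j+1) := by
    intro j
    cases j with
    | zero =>
      rw [hs1, hsIdef]
      rw [div_lt_div_iff₀ hα hα]
      nlinarith [hsI1, mul_div_cancel₀ (2*β-1-2*σ) (ne_of_gt hα)]
    | succ j =>
      by_contra h
      push_neg at h
      have hd2 : d ≤ s (j+2) := (hsrec (j+1) (by omega)).1.1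
      have := hlow (s (j+2)) hd2 h (j+1)
      rw [hneg1 (j+1)] at this
      exact lt_irrefl _ this
  -- main invariant by induction
  have hinv : ∀ j : ℕ,
      (∀ t1 t2 : ℝ, d ≤ t1 → t1 < t2 → t2 ≤ s (j+1) →
        fseq α β d j t2 < fseq α β d j t1) ∧
      (∀ t : ℝ, d ≤ t → t < s (j+1) → -1 < fseq α β d j t) := by
    intro j
    induction j with
    | zero =>
      constructor
      · intro t1 t2 _ h12 _
        show -α * t2 < -α * t1
        nlinarith
      · intro t _ ht
        show -1 < -α * t
        rw [hs1, lt_div_iff₀ hα] at ht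
        nlinarith
    | succ j ih =>
      have hBA : s (j+2) < s (j+1) := hdec (j+1) (by omega)
      have hmono : ∀ t1 t2 : ℝ, d ≤ t1 → t1 < t2 → t2 ≤ s (j+1+1) →
          fseq α β d (j+1) t2 < fseq α β d (j+1) t1 := by
        intro t1 t2 hd1 h12 h2B
        have h2B' : t2 ≤ s (j+2) := h2B
        have hx1 : -1 < fseq α β d j t1 :=
          ih.2 t1 hd1 (by linarith)
        have hx2 : -1 < fseq α β d j t2 :=
          ih.2 t2 (by linarith) (by linarith)
        have hx21 : fseq α β d j t2 < fseq α β d j t1 :=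
          ih.1 t1 t2 hd1 h12 (by linarith)
        show Fmap α β d t2 (fseq α β d j t2) < Fmap α β d t1 (fseq α β d j t1)
        set x1 := fseq α β d j t1
        set x2 := fseq α β d j t2
        have hD1 : 0 < 1 + x1 + α * t1 - α * d := by nlinarith
        have hD2 : 0 < 1 + x2 + α * t2 - α * d := by nlinarith
        have key : Fmap α β d t1 x1 - Fmap α β d t2 x2 =
            α * (β - α*d) * ((t2-t1)*(1+x1) + (t1-d)*(x1-x2)) /
              ((1 + x1 + α * t1 - α * d) * (1 + x2 + α * t2 - α * d)) := by
          rw [Fmap, Fmap]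
          field_simp
          ring
        have hpos : 0 < α * (β - α*d) * ((t2-t1)*(1+x1) + (t1-d)*(x1-x2)) := by
          have h1 : 0 < (t2-t1)*(1+x1) + (t1-d)*(x1-x2) := by nlinarith
          have hb : 0 < β - α*d := by linarith
          positivity
        nlinarith [div_pos hpos (mul_pos hD1 hD2)]
      refine ⟨hmono, ?_⟩
      intro t hdt htB
      have h1 := hmono t (s (j+2)) hdt htB (le_refl _)
      rw [hneg1 (j+1)] at h1
      exact h1
  -- convergence
  set l := ⨅ n, s (n+1) with hldef
  have hanti : Antitone (fun n => s (n+1)) :=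
    antitone_nat_of_succ_le (fun n => (hsrec (n+1) (by omega)).1.2)
  have hbdd : BddBelow (Set.range fun n => s (n+1)) :=
    ⟨sI, by rintro x ⟨n, rfl⟩; exact (hsI_lt n).le⟩
  have htend : Filter.Tendsto (fun n => s (n+1)) Filter.atTop (nhds l) :=
    tendsto_atTop_ciInf hanti hbdd
  have hlge : sI ≤ l := le_ciInf (fun n => (hsI_lt n).le)
  have hlle : l ≤ sI := by
    by_contra hcon
    push_neg at hcon
    set t := (sI + l)/2 with htdef
    have hst : sI < t := by rw [htdef]; linarith
    have htl : t < l := by rw [htdef]; linarith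
    have hls1 : l ≤ 1/α := by
      have h := ciInf_le hbdd 0
      rwa [hs1] at h
    have ht1 : α * t ≤ 1 := by
      have h : t < 1/α := lt_of_lt_of_le htl hls1
      rw [lt_div_iff₀ hα] at h
      nlinarith
    have hall : ∀ k, -1 < fseq α β d k t := by
      intro k
      apply (hinv k).2 t (le_of_lt (hdsI.trans hst))
      exact lt_of_lt_of_le htl (ciInf_le hbdd k)
    have hst' : (2*β - 1 - 2*Real.sqrt ((β-1)*(β-α*d)))/α < t := by
      rw [hsIdef, hσdef] at hst
      exact hst
    exact descent' hα hβ hd hαd hst' ht1 hall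
  have hleq : l = sI := le_antisymm hlle hlge
  have hfin : Filter.Tendsto s Filter.atTop (nhds l) := by
    rw [← Filter.tendsto_add_atTop_iff_nat 1]
    exact htend
  rw [hleq] at hfin
  exact hfin
end

section
/- The function g(γ) = d - (γ(αd - 1) - αd + β)/(αγ(γ - 1)), defined for γ ∈ ((β - αd)/(1 - αd), ∞) where α > 0, β > 1, d ≥ 0, αd < 1, attains its maximum at γ̄ = (β - αd + √((β-1)(β-αd)))/(1 - αd), with maximal value g(γ̄) = (2β - 1 - 2√((β-1)(β-αd)))/α. -/
noncomputable def gFun (α β d γ : ℝ) : ℝ :=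
  d - (γ * (α * d - 1) - α * d + β) / (α * γ * (γ - 1))

lemma gFun_val_aux (α β d s u : ℝ) (hα : 0 < α) (hαd : α * d < 1) (hu0 : 0 < u) (hu1 : 1 < u)
    (hs2 : s ^ 2 = (β - 1) * (β - α * d)) (hb1 : (1 - α * d) * u = β - α * d + s) :
    gFun α β d u = (2 * β - 1 - 2 * s) / α := by
  have hD : (0:ℝ) < α * u * (u - 1) := by
    apply mul_pos (mul_pos hα hu0); linarith
  rw [gFun, sub_eq_iff_eq_add, div_add_div _ _ hα.ne' hD.ne',
    eq_div_iff (mul_ne_zero hα.ne' hD.ne')]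
  have h1a2 : ((1 - α * d) ^ 2 : ℝ) ≠ 0 :=
    pow_ne_zero 2 (by linarith : (1 - α * d : ℝ) ≠ 0)
  have key : (d * (α * (α * u * (u - 1))) -
      ((2 * β - 1 - 2 * s) * (α * u * (u - 1)) + α * (u * (α * d - 1) - α * d + β))) *
      (1 - α * d) ^ 2 = 0 := by
    linear_combination (-α) *
      (((2 * β - 1 - 2 * s - α * d) * (1 - α * d) * u +
          (2 * β - 1 - 2 * s - α * d) * (β - α * d + s) -
          (2 * β - 2 * s - 2 * α * d) * (1 - α * d)) * hb1 +
        (1 + α * d - 2 * β - 2 * s) * hs2)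
  have := (mul_eq_zero.mp key).resolve_right h1a2
  linarith [this]

lemma gFun_le_aux (α β d s γ : ℝ) (hα : 0 < α) (hβ : 1 < β) (hαd : α * d < 1)
    (hγ0 : 0 < γ) (hγ1 : 1 < γ) (hs0 : 0 < s)
    (hs2 : s ^ 2 = (β - 1) * (β - α * d)) (hca : 2 * s < (β - 1) + (β - α * d)) :
    gFun α β d γ ≤ (2 * β - 1 - 2 * s) / α := by
  have hD : 0 < α * γ * (γ - 1) := by
    apply mul_pos (mul_pos hα hγ0); linarith
  have h1a : (0:ℝ) < 1 - α * d := by linarith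
  rw [gFun, sub_le_iff_le_add, div_add_div _ _ hα.ne' hD.ne',
    le_div_iff₀ (mul_pos hα hD)]
  nlinarith [mul_nonneg (by nlinarith : (0:ℝ) ≤ 2 * β - 1 - 2 * s - α * d)
      (sq_nonneg ((1 - α * d) * γ - (β - α * d + s))), hs2, mul_pos h1a h1a,
    mul_pos hα (mul_pos h1a h1a), sq_nonneg ((1 - α * d) * γ - (β - α * d))]

theorem stmt_10 (α β d : ℝ) (hα : 0 < α) (hβ : 1 < β) (hd : 0 ≤ d) (hαd : α * d < 1) :
    let γbar := (β - α * d + Real.sqrt ((β - 1) * (β - α * d))) / (1 - α * d)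
    γbar ∈ Set.Ioi ((β - α * d) / (1 - α * d)) ∧
    gFun α β d γbar = (2 * β - 1 - 2 * Real.sqrt ((β - 1) * (β - α * d))) / α ∧
    ∀ γ ∈ Set.Ioi ((β - α * d) / (1 - α * d)), gFun α β d γ ≤ gFun α β d γbar := by
  intro γbar
  set s := Real.sqrt ((β - 1) * (β - α * d)) with hs_def
  have h1a : (0:ℝ) < 1 - α * d := by linarith
  have hβa : (0:ℝ) < β - α * d := by linarith
  have hs2 : s ^ 2 = (β - 1) * (β - α * d) := by
    rw [hs_def, Real.sq_sqrt (by nlinarith : (0:ℝ) ≤ (β - 1) * (β - α * d))]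
  have hs0 : 0 < s := by
    rw [hs_def]; exact Real.sqrt_pos.mpr (by nlinarith)
  have hca : 2 * s < (β - 1) + (β - α * d) := by
    nlinarith [sq_nonneg ((β - 1) - (β - α * d)), sq_nonneg (s - (β - 1)), sq_nonneg (s - (β - α * d))]
  have hb : γbar = (β - α * d + s) / (1 - α * d) := rfl
  have hb1 : (1 - α * d) * γbar = β - α * d + s := by
    rw [hb, mul_div_cancel₀ _ h1a.ne']
  have hγbar1 : 1 < γbar := by
    rw [hb, lt_div_iff₀ h1a]; nlinarith
  have hγbar0 : 0 < γbar := by linarith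
  have hmem : γbar ∈ Set.Ioi ((β - α * d) / (1 - α * d)) := by
    simp only [Set.mem_Ioi]
    exact div_lt_div_of_pos_right (by linarith) h1a
  have hval : gFun α β d γbar = (2 * β - 1 - 2 * s) / α :=
    gFun_val_aux α β d s γbar hα hαd hγbar0 hγbar1 hs2 hb1
  refine ⟨hmem, hval, ?_⟩
  intro γ hγ
  simp only [Set.mem_Ioi] at hγ
  have hγ1 : 1 < γ := by
    have : (1:ℝ) < (β - α * d) / (1 - α * d) := by
      rw [lt_div_iff₀ h1a]; linarith
    linarith
  have hγ0 : 0 < γ := by linarith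
  rw [hval]
  exact gFun_le_aux α β d s γ hα hβ hαd hγ0 hγ1 hs0 hs2 hca
end

section
/- Let β < 1, ε > 0, and (w_n) a non-negative sequence with w_n ≤ n^{-β+o(1)}, W_n = Σ_{k≤n} w_k = n^{1-β+o(1)}, and suppose liminf_{n→∞} (1/W_n) Σ_{k=1}^n w_k·1_{k ∈ G} > 0 for some set G ⊆ ℕ. Then there exists a constant C_ε > 0 such that for all sufficiently large N, Σ_{k=N}^{⌊N^{1+ε}⌋} (w_k/W_k)·1_{k ∈ G} ≥ C_ε · log N. -/
open Filter Finset Real Topology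
open scoped Classical

/-!
Write `T n` for the part of `W n` carried by `G`; the liminf hypothesis gives `c * W n ≤ T n`
eventually. Summation by parts against the weights `1 / W k` turns this into
`∑_{N<k≤M} 1_G w_k / W_k ≥ c ∑_{N<k≤M} w_k / W_k - T_N / W_N`, and since `w_k ≤ W_k / 2`
eventually, `∑_{N<k≤M} w_k / W_k ≥ (log W_M - log W_N) / 2`. As `log W_n ~ (1 - β) log n`,
for `M = ⌊N^(1+ε)⌋` this log-difference is at least `(1 - β) ε / 2 · log N` for large `N`.
-/

lemma exists_pos_eventually_mul_le_of_liminf_pos {T W : ℕ → ℝ} (hT : ∀ n, 0 ≤ T n)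
    (hW : ∀ n, 0 ≤ W n) (h : 0 < liminf (fun n => T n / W n) atTop) :
    ∃ c > 0, ∀ᶠ n in atTop, c * W n ≤ T n := by
  refine ⟨_, half_pos h, ?_⟩
  have hbdd : IsBoundedUnder (· ≥ ·) atTop (fun n => T n / W n) :=
    isBoundedUnder_of ⟨0, fun n => div_nonneg (hT n) (hW n)⟩
  filter_upwards [eventually_lt_of_lt_liminf (half_lt_self h) hbdd] with n hn
  rcases (hW n).eq_or_lt with hWn | hWn
  · simp [← hWn, hT n]
  · exact ((lt_div_iff₀ hWn).mp hn).le

lemma log_sub_log_le_two_mul_sub_div {a b : ℝ} (ha : 0 < a) (hab : a ≤ b) (hb : b ≤ 2 * a) :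
    log b - log a ≤ 2 * ((b - a) / b) := by
  have hb0 : 0 < b := ha.trans_le hab
  calc log b - log a = log (b / a) := (log_div hb0.ne' ha.ne').symm
    _ ≤ b / a - 1 := log_le_sub_one_of_pos (div_pos hb0 ha)
    _ = (b - a) / a := by field_simp
    _ ≤ 2 * ((b - a) / b) := by
      rw [mul_div_assoc', div_le_div_iff₀ ha hb0]
      nlinarith

section PartialSums

variable {a w W T : ℕ → ℝ} {N M : ℕ}

lemma div_add_mul_sum_le_div_add_sum {c : ℝ} (hW : ∀ k, W (k + 1) = W k + w (k + 1))
    (hT : ∀ k, T (k + 1) = T k + a (k + 1)) (hw : ∀ k, 0 ≤ w k)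
    (hWpos : ∀ k, N ≤ k → 0 < W k) (hcW : ∀ k, N ≤ k → c * W k ≤ T k) (hNM : N ≤ M) :
    T M / W M + c * ∑ k ∈ Icc (N + 1) M, w k / W k ≤
      T N / W N + ∑ k ∈ Icc (N + 1) M, a k / W k := by
  induction M, hNM using Nat.le_induction with
  | base => simp
  | succ M hNM ih =>
    rw [sum_Icc_succ_top (by omega), sum_Icc_succ_top (by omega), mul_add]
    have hWM := hWpos M hNM
    have hWM' := hWpos (M + 1) (by omega)
    have hstep : (T M + c * w (M + 1)) / W (M + 1) ≤ T M / W M := by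
      rw [div_le_div_iff₀ hWM' hWM, hW M]
      nlinarith [mul_le_mul_of_nonneg_right (hcW M hNM) (hw (M + 1))]
    have hsplit : T (M + 1) / W (M + 1) + c * (w (M + 1) / W (M + 1)) =
        (T M + c * w (M + 1)) / W (M + 1) + a (M + 1) / W (M + 1) := by
      rw [hT M]; ring
    linarith

lemma log_sub_log_le_two_mul_sum_div (hW : ∀ k, W (k + 1) = W k + w (k + 1))
    (hw : ∀ k, 0 ≤ w k) (hWpos : ∀ k, N ≤ k → 0 < W k) (hsmall : ∀ k, N < k → 2 * w k ≤ W k)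
    (hNM : N ≤ M) :
    log (W M) - log (W N) ≤ 2 * ∑ k ∈ Icc (N + 1) M, w k / W k := by
  induction M, hNM using Nat.le_induction with
  | base => simp
  | succ M hNM ih =>
    have hstep : log (W (M + 1)) - log (W M) ≤ 2 * (w (M + 1) / W (M + 1)) := by
      have h := log_sub_log_le_two_mul_sub_div (hWpos M hNM) (b := W (M + 1))
        (by linarith [hW M, hw (M + 1)]) (by linarith [hW M, hsmall (M + 1) (by omega)])
      rwa [hW M, add_sub_cancel_left, ← hW M] at h
    rw [sum_Icc_succ_top (by omega), mul_add]
    linarith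

lemma mul_log_sub_log_le_div_add_sum {c : ℝ} (hc : 0 ≤ c)
    (hW : ∀ k, W (k + 1) = W k + w (k + 1)) (hT : ∀ k, T (k + 1) = T k + a (k + 1))
    (hw : ∀ k, 0 ≤ w k) (hWpos : ∀ k, N ≤ k → 0 < W k) (hcW : ∀ k, N ≤ k → c * W k ≤ T k)
    (hsmall : ∀ k, N < k → 2 * w k ≤ W k) (hNM : N ≤ M) :
    c / 2 * (log (W M) - log (W N)) ≤ T N / W N + ∑ k ∈ Icc (N + 1) M, a k / W k := by
  have habel := div_add_mul_sum_le_div_add_sum hW hT hw hWpos hcW hNM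
  have hlog := mul_le_mul_of_nonneg_left (log_sub_log_le_two_mul_sum_div hW hw hWpos hsmall hNM)
    (by positivity : 0 ≤ c / 2)
  have hTM : 0 ≤ T M / W M :=
    div_nonneg ((mul_nonneg hc (hWpos M hNM).le).trans (hcW M hNM)) (hWpos M hNM).le
  linarith

lemma mul_log_sub_log_sub_one_le_sum_ite (G : Set ℕ) {c : ℝ} (hc : 0 ≤ c) (hw : ∀ k, 0 ≤ w k)
    (hW : ∀ n, W n = ∑ k ∈ Icc 1 n, w k) (hWpos : ∀ k, N ≤ k → 0 < W k)
    (hcW : ∀ n, N ≤ n → c * W n ≤ ∑ k ∈ Icc 1 n, if k ∈ G then w k else 0)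
    (hsmall : ∀ k, N < k → 2 * w k ≤ W k) (hNM : N ≤ M) :
    c / 2 * (log (W M) - log (W N)) - 1 ≤ ∑ k ∈ Icc N M, if k ∈ G then w k / W k else 0 := by
  have hstep {f : ℕ → ℝ} (k : ℕ) : ∑ i ∈ Icc 1 (k + 1), f i = ∑ i ∈ Icc 1 k, f i + f (k + 1) :=
    sum_Icc_succ_top (by omega) _
  have hwindow := mul_log_sub_log_le_div_add_sum (a := fun k => if k ∈ G then w k else 0)
    (T := fun n => ∑ k ∈ Icc 1 n, if k ∈ G then w k else 0) hc
    (fun k => by rw [hW, hW, hstep]) hstep hw hWpos hcW hsmall hNM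
  have hTW : (∑ k ∈ Icc 1 N, if k ∈ G then w k else 0) ≤ W N := hW N ▸ sum_le_sum fun k _ => by
    split_ifs <;> simp [hw k]
  have hshift : ∑ k ∈ Icc (N + 1) M, (if k ∈ G then w k else 0) / W k ≤
      ∑ k ∈ Icc N M, if k ∈ G then w k / W k else 0 := by
    simp only [ite_div, zero_div]
    refine sum_le_sum_of_subset_of_nonneg (Icc_subset_Icc_left (by omega)) fun k hk _ => ?_
    split_ifs
    exacts [div_nonneg (hw k) (hWpos k (mem_Icc.mp hk).1).le, le_rfl]
  linarith [div_le_one_of_le₀ hTW (hWpos N le_rfl).le]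

end PartialSums

lemma eventually_two_mul_le_of_le_rpow {w W e e' : ℕ → ℝ} {β : ℝ}
    (he : Tendsto e atTop (𝓝 0)) (he' : Tendsto e' atTop (𝓝 0))
    (hw : ∀ n, 1 ≤ n → w n ≤ (n : ℝ) ^ (-β + e n))
    (hW : ∀ n, 1 ≤ n → W n = (n : ℝ) ^ (1 - β + e' n)) :
    ∀ᶠ n in atTop, 2 * w n ≤ W n := by
  have hexp : ∀ᶠ n in atTop, e n - e' n ≤ 1 / 2 :=
    (he.sub he').eventually_le_const (by norm_num)
  have hdecay : ∀ᶠ n : ℕ in atTop, (n : ℝ) ^ (-(1 / 2 : ℝ)) ≤ 1 / 2 :=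
    ((tendsto_rpow_neg_atTop (by norm_num)).comp tendsto_natCast_atTop_atTop).eventually_le_const
      (by norm_num)
  filter_upwards [hexp, hdecay, eventually_ge_atTop 1] with n hexp hdecay hn
  have hn' : (1 : ℝ) ≤ n := by exact_mod_cast hn
  have hWn : 0 < W n := hW n hn ▸ by positivity
  calc 2 * w n ≤ 2 * (n : ℝ) ^ (-1 + (e n - e' n) + (1 - β + e' n)) := by
        rw [show -1 + (e n - e' n) + (1 - β + e' n) = -β + e n by ring]
        linarith [hw n hn]
    _ = 2 * ((n : ℝ) ^ (-1 + (e n - e' n)) * W n) := by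
        rw [rpow_add (by positivity), hW n hn]
    _ ≤ 2 * ((n : ℝ) ^ (-(1 / 2 : ℝ)) * W n) := by
        gcongr
        linarith
    _ ≤ W n := by nlinarith

lemma tendsto_log_div_log_of_eq_rpow {f e : ℕ → ℝ} {α : ℝ} (he : Tendsto e atTop (𝓝 0))
    (hf : ∀ n, 1 ≤ n → f n = (n : ℝ) ^ (α + e n)) :
    Tendsto (fun n => log (f n) / log n) atTop (𝓝 α) := by
  have hlim : Tendsto (fun n => α + e n) atTop (𝓝 α) := by simpa using he.const_add α
  refine hlim.congr' ?_
  filter_upwards [eventually_ge_atTop 2] with n hn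
  have hlog : 0 < log n := log_pos (by exact_mod_cast hn)
  rw [hf n (by omega), log_rpow (by positivity), mul_div_cancel_right₀ _ hlog.ne']

lemma tendsto_log_natFloor_rpow_div_log {p : ℝ} (hp : 0 < p) :
    Tendsto (fun N : ℕ => log ⌊(N : ℝ) ^ p⌋₊ / log N) atTop (𝓝 p) := by
  have hlogN : Tendsto (fun N : ℕ => log N) atTop atTop :=
    tendsto_log_atTop.comp tendsto_natCast_atTop_atTop
  have hlower : Tendsto (fun N : ℕ => p - log 2 / log N) atTop (𝓝 p) := by
    simpa using tendsto_const_nhds.sub (tendsto_const_nhds.div_atTop hlogN)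
  refine tendsto_of_tendsto_of_tendsto_of_le_of_le' hlower tendsto_const_nhds ?_ ?_
  all_goals
    filter_upwards [eventually_ge_atTop 2,
      ((tendsto_rpow_atTop hp).comp tendsto_natCast_atTop_atTop).eventually_ge_atTop 2]
      with N hN hNp
    have hlog : 0 < log N := log_pos (by exact_mod_cast hN)
    have hfloor : 0 < (⌊(N : ℝ) ^ p⌋₊ : ℝ) := by
      exact_mod_cast Nat.floor_pos.mpr (by simp at hNp; linarith)
  · rw [sub_div' hlog.ne', div_le_div_iff_of_pos_right hlog, ← log_rpow (by positivity),
      ← log_div (by simp at hNp ⊢; positivity) two_ne_zero]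
    simp only [Function.comp] at hNp
    apply log_le_log (by positivity)
    linarith [Nat.sub_one_lt_floor ((N : ℝ) ^ p)]
  · rw [div_le_iff₀ hlog, ← log_rpow (by positivity)]
    exact log_le_log hfloor (Nat.floor_le (by positivity))

lemma eventually_mul_log_le_log_sub_log {W : ℕ → ℝ} {α p η : ℝ} (hp : 0 < p)
    (hW : Tendsto (fun n => log (W n) / log n) atTop (𝓝 α)) (hη : η < α * (p - 1)) :
    ∀ᶠ N : ℕ in atTop, η * log N ≤ log (W ⌊(N : ℝ) ^ p⌋₊) - log (W N) := by
  have hm : Tendsto (fun N : ℕ => ⌊(N : ℝ) ^ p⌋₊) atTop atTop :=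
    tendsto_nat_floor_atTop.comp ((tendsto_rpow_atTop hp).comp tendsto_natCast_atTop_atTop)
  have hlim := ((hW.comp hm).mul (tendsto_log_natFloor_rpow_div_log hp)).sub hW
  rw [← mul_sub_one] at hlim
  filter_upwards [hlim.eventually_const_lt hη, eventually_ge_atTop 2, hm.eventually_ge_atTop 2]
    with N hN hN2 hm2
  have hlog : 0 < log N := log_pos (by exact_mod_cast hN2)
  have hlogm : 0 < log ⌊(N : ℝ) ^ p⌋₊ := log_pos (by exact_mod_cast hm2)
  simp only [Function.comp, div_mul_div_cancel₀ hlogm.ne', div_sub_div_same,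
    lt_div_iff₀ hlog] at hN
  exact hN.le

theorem stmt_13 (β ε : ℝ) (hβ : β < 1) (hε : 0 < ε)
    (w : ℕ → ℝ) (hw : ∀ n, 0 ≤ w n) (W : ℕ → ℝ)
    (hW : ∀ n, W n = ∑ k ∈ Finset.Icc 1 n, w k)
    (G : Set ℕ)
    -- w_n ≤ n^{-β+o(1)}
    (hwbound : ∃ e : ℕ → ℝ, Tendsto e atTop (nhds 0) ∧
      ∀ n : ℕ, 1 ≤ n → w n ≤ (n : ℝ) ^ (-β + e n))
    -- W_n = n^{1-β+o(1)}
    (hWgrowth : ∃ e : ℕ → ℝ, Tendsto e atTop (nhds 0) ∧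
      ∀ n : ℕ, 1 ≤ n → W n = (n : ℝ) ^ (1 - β + e n))
    -- liminf (1/W_n) Σ_{k≤n} w_k 1_{k∈G} > 0
    (hliminf : 0 < atTop.liminf
      (fun n => (∑ k ∈ Finset.Icc 1 n, if k ∈ G then w k else 0) / W n)) :
    ∃ C > 0, ∀ᶠ N : ℕ in atTop,
      C * Real.log N ≤
        ∑ k ∈ Finset.Icc N ⌊(N : ℝ) ^ (1 + ε)⌋₊, if k ∈ G then w k / W k else 0 := by
  obtain ⟨e, he, hwe⟩ := hwbound
  obtain ⟨e', he', hWe⟩ := hWgrowth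
  have hWpos : ∀ n, 1 ≤ n → 0 < W n := fun n hn => hWe n hn ▸ by positivity
  obtain ⟨c, hc, hcW⟩ := exists_pos_eventually_mul_le_of_liminf_pos
    (fun n => sum_nonneg fun k _ => by split_ifs <;> simp [hw k])
    (fun n => hW n ▸ sum_nonneg fun k _ => hw k) hliminf
  obtain ⟨K, hK⟩ := eventually_atTop.mp
    (hcW.and (eventually_two_mul_le_of_le_rpow he he' hwe hWe))
  set η := (1 - β) * ε / 2
  have hlog := eventually_mul_log_le_log_sub_log (η := η) (by linarith : 0 < 1 + ε)
    (tendsto_log_div_log_of_eq_rpow he' hWe)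
    (by rw [add_sub_cancel_left]; exact half_lt_self (by nlinarith))
  have hC : 0 < c * η / 4 := by positivity
  refine ⟨c * η / 4, hC, ?_⟩
  filter_upwards [hlog, eventually_ge_atTop (K + 1), ((tendsto_log_atTop.comp
    tendsto_natCast_atTop_atTop).const_mul_atTop hC).eventually_ge_atTop 1] with N hlogN hN hbig
  have hNM : N ≤ ⌊(N : ℝ) ^ (1 + ε)⌋₊ := Nat.le_floor <| by
    simpa using Real.self_le_rpow_of_one_le (by exact_mod_cast (by omega : 1 ≤ N))
      (by linarith : 1 ≤ 1 + ε)
  have hwindow := mul_log_sub_log_sub_one_le_sum_ite G hc.le hw hW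
    (fun k hk => hWpos k (by omega)) (fun k hk => (hK k (by omega)).1)
    (fun k hk => (hK k (by omega)).2) hNM
  simp only [Function.comp_apply] at hbig
  linarith [mul_le_mul_of_nonneg_left hlogN (by positivity : 0 ≤ c / 2)]
end

section
/- Let γ > 1 and define n_0 ≥ 2 and n_{k+1} = ⌈n_k^γ⌉ for k ≥ 0. Suppose (a_k)_{k≥1} is a sequence of positive reals with log a_k = (1 - β + r_k)·log n_k where r_k → 0 as k → ∞ and β ∈ ℝ. Then Σ_{i=1}^k log a_i = (γ(1-β)/(γ-1) + o(1))·log n_k as k → ∞; equivalently, ∏_{i=1}^k a_i = n_k^{γ(1-β)/(γ-1) + o(1)}. -/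
/-!
With `L_k = log n_k` the recursion gives `γ L_k ≤ L_{k+1} ≤ γ L_k + log 2`, so `L_k → ∞` and
`L_{k+1} / (L_{k+1} - L_k) → γ / (γ - 1)`. The partial sums `S_k = ∑_{i ≤ k} log a_i` have
increments `S_{k+1} - S_k = (1 - β + r_{k+1}) L_{k+1}`, so by the Stolz–Cesàro theorem
`S_k / L_k → (1 - β) γ / (γ - 1)`.
-/

open Filter Topology Asymptotics Real

theorem tendsto_div_of_tendsto_sub_div_sub {u v : ℕ → ℝ} {l : ℝ} (hv : StrictMono v)
    (hv_top : Tendsto v atTop atTop)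
    (h : Tendsto (fun k => (u (k + 1) - u k) / (v (k + 1) - v k)) atTop (𝓝 l)) :
    Tendsto (fun k => u k / v k) atTop (𝓝 l) := by
  set w := fun k => u k - l * v k
  have hg : ∀ k, 0 < v (k + 1) - v k := fun k => sub_pos.2 (hv k.lt_succ_self)
  have hconst : ∀ c : ℝ, (fun _ : ℕ => c) =o[atTop] v := fun c =>
    isLittleO_const_left.2 (Or.inr (tendsto_norm_atTop_atTop.comp hv_top))
  have hstep : (fun k => w (k + 1) - w k) =o[atTop] fun k => v (k + 1) - v k := by
    rw [isLittleO_iff_tendsto' (Eventually.of_forall fun k hk => absurd hk (hg k).ne')]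
    refine (tendsto_sub_nhds_zero_iff.2 h).congr fun k => ?_
    rw [show w (k + 1) - w k = u (k + 1) - u k - l * (v (k + 1) - v k) by ring, sub_div _ (l * _),
      mul_div_cancel_right₀ _ (hg k).ne']
  have hsum := hstep.sum_range (fun k => (hg k).le)
    ((tendsto_atTop_add_const_right _ (-v 0) hv_top).congr fun k => by
      rw [Finset.sum_range_sub, sub_eq_add_neg])
  simp only [Finset.sum_range_sub] at hsum
  have hw : w =o[atTop] v :=
    ((hsum.trans_isBigO ((isBigO_refl v _).sub (hconst (v 0)).isBigO)).add
      (hconst (w 0))).congr_left fun k => sub_add_cancel (w k) (w 0)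
  rw [← tendsto_sub_nhds_zero_iff]
  refine hw.tendsto_div_nhds_zero.congr' ?_
  filter_upwards [hv_top.eventually_gt_atTop 0] with k hk
  rw [sub_div, mul_div_cancel_right₀ _ hk.ne']

theorem log_le_log_natCeil {y : ℝ} (hy : 0 < y) : log y ≤ log ⌈y⌉₊ :=
  log_le_log hy (Nat.le_ceil y)

theorem log_natCeil_le_log_add_log_two {y : ℝ} (hy : 1 ≤ y) :
    log ⌈y⌉₊ ≤ log y + log 2 := by
  rw [← log_mul (by positivity) two_ne_zero]
  refine log_le_log (by positivity) ?_
  linarith [Nat.ceil_lt_add_one (zero_le_one.trans hy)]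

section GrowthRecursion

variable {γ c : ℝ} {L : ℕ → ℝ}

theorem mul_pow_le_of_mul_le_succ (hγ : 0 ≤ γ) (hL : ∀ k, γ * L k ≤ L (k + 1)) (k : ℕ) :
    L 0 * γ ^ k ≤ L k := by
  induction k with
  | zero => simp
  | succ k ih =>
    rw [pow_succ', mul_left_comm]
    exact (mul_le_mul_of_nonneg_left ih hγ).trans (hL k)

theorem pos_of_mul_le_succ (hγ : 0 < γ) (hL0 : 0 < L 0) (hL : ∀ k, γ * L k ≤ L (k + 1))
    (k : ℕ) : 0 < L k :=
  (mul_pos hL0 (pow_pos hγ k)).trans_le (mul_pow_le_of_mul_le_succ hγ.le hL k)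

theorem strictMono_of_mul_le_succ (hγ : 1 < γ) (hL0 : 0 < L 0)
    (hL : ∀ k, γ * L k ≤ L (k + 1)) :
    StrictMono L :=
  strictMono_nat_of_lt_succ fun k =>
    (lt_mul_of_one_lt_left (pos_of_mul_le_succ (by linarith) hL0 hL k) hγ).trans_le (hL k)

theorem tendsto_atTop_of_mul_le_succ (hγ : 1 < γ) (hL0 : 0 < L 0)
    (hL : ∀ k, γ * L k ≤ L (k + 1)) :
    Tendsto L atTop atTop :=
  tendsto_atTop_mono (mul_pow_le_of_mul_le_succ (by linarith) hL)
    ((tendsto_pow_atTop_atTop_of_one_lt hγ).const_mul_atTop hL0)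

theorem tendsto_succ_div_of_mul_le_succ (hγ : 1 < γ) (hL0 : 0 < L 0)
    (hL : ∀ k, γ * L k ≤ L (k + 1)) (hLc : ∀ k, L (k + 1) ≤ γ * L k + c) :
    Tendsto (fun k => L (k + 1) / L k) atTop (𝓝 γ) := by
  have hpos := pos_of_mul_le_succ (by linarith) hL0 hL
  have hupper : Tendsto (fun k => γ + c / L k) atTop (𝓝 γ) := by
    simpa using
      (tendsto_const_nhds.div_atTop (tendsto_atTop_of_mul_le_succ hγ hL0 hL)).const_add γ
  refine tendsto_of_tendsto_of_tendsto_of_le_of_le tendsto_const_nhds hupper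
    (fun k => (le_div_iff₀ (hpos k)).2 (hL k)) fun k => ?_
  rw [div_le_iff₀ (hpos k), add_mul, div_mul_cancel₀ _ (hpos k).ne']
  exact hLc k

theorem tendsto_succ_div_sub_of_mul_le_succ (hγ : 1 < γ) (hL0 : 0 < L 0)
    (hL : ∀ k, γ * L k ≤ L (k + 1)) (hLc : ∀ k, L (k + 1) ≤ γ * L k + c) :
    Tendsto (fun k => L (k + 1) / (L (k + 1) - L k)) atTop (𝓝 (γ / (γ - 1))) := by
  have hpos := pos_of_mul_le_succ (by linarith) hL0 hL
  have hratio := tendsto_succ_div_of_mul_le_succ hγ hL0 hL hLc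
  refine (hratio.div (hratio.sub_const 1) (by linarith)).congr fun k => ?_
  simp only [Pi.div_apply]
  rw [div_sub_one (hpos k).ne', div_div_div_cancel_right₀ (hpos k).ne']

end GrowthRecursion

theorem stmt_14_general (γ β : ℝ) (hγ : 1 < γ)
    (n : ℕ → ℕ) (hn0 : 2 ≤ n 0)
    (hnrec : ∀ k : ℕ, n (k + 1) = ⌈(n k : ℝ) ^ γ⌉₊)
    (a : ℕ → ℝ)
    (r : ℕ → ℝ) (hr : Tendsto r atTop (nhds 0))
    (hlog : ∀ k : ℕ, 1 ≤ k → Real.log (a k) = (1 - β + r k) * Real.log (n k)) :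
    ∃ e : ℕ → ℝ, Tendsto e atTop (nhds 0) ∧
      ∀ k : ℕ, 1 ≤ k →
        ∑ i ∈ Finset.Icc 1 k, Real.log (a i) =
          (γ * (1 - β) / (γ - 1) + e k) * Real.log (n k) := by
  set L : ℕ → ℝ := fun k => log (n k)
  set S : ℕ → ℝ := fun k => ∑ i ∈ Finset.Icc 1 k, log (a i)
  have hn_pos : ∀ k, 0 < n k := fun k => by
    induction k with
    | zero => omega
    | succ k ih => exact hnrec k ▸ Nat.ceil_pos.2 (rpow_pos_of_pos (by exact_mod_cast ih) γ)
  have hL0 : 0 < L 0 := log_pos (by exact_mod_cast hn0)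
  have hL_lower : ∀ k, γ * L k ≤ L (k + 1) := fun k => by
    have hnk : (0 : ℝ) < n k := by exact_mod_cast hn_pos k
    simpa only [L, hnrec, log_rpow hnk] using log_le_log_natCeil (rpow_pos_of_pos hnk γ)
  have hL_upper : ∀ k, L (k + 1) ≤ γ * L k + log 2 := fun k => by
    have hnk : (1 : ℝ) ≤ n k := by exact_mod_cast hn_pos k
    simpa only [L, hnrec, log_rpow (zero_lt_one.trans_le hnk)] using
      log_natCeil_le_log_add_log_two (one_le_rpow hnk (by linarith))
  have hS_step : ∀ k, S (k + 1) - S k = (1 - β + r (k + 1)) * L (k + 1) := fun k => by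
    simp only [S, Finset.sum_Icc_succ_top (Nat.le_add_left 1 k), add_sub_cancel_left]
    exact hlog _ (Nat.le_add_left 1 k)
  have hS : Tendsto (fun k => S k / L k) atTop (𝓝 (γ * (1 - β) / (γ - 1))) := by
    refine tendsto_div_of_tendsto_sub_div_sub (strictMono_of_mul_le_succ hγ hL0 hL_lower)
      (tendsto_atTop_of_mul_le_succ hγ hL0 hL_lower) ?_
    have hcoef : Tendsto (fun k => 1 - β + r (k + 1)) atTop (𝓝 (1 - β)) := by
      simpa using (hr.comp (tendsto_add_atTop_nat 1)).const_add (1 - β)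
    convert hcoef.mul (tendsto_succ_div_sub_of_mul_le_succ hγ hL0 hL_lower hL_upper) using 1
    · funext k
      rw [hS_step, mul_div_assoc]
    · rw [mul_comm γ, mul_div_assoc]
  refine ⟨fun k => S k / L k - γ * (1 - β) / (γ - 1), tendsto_sub_nhds_zero_iff.2 hS,
    fun k _ => ?_⟩
  rw [add_sub_cancel, div_mul_cancel₀ _ (pos_of_mul_le_succ (by linarith) hL0 hL_lower k).ne']

theorem stmt_14 (γ β : ℝ) (hγ : 1 < γ)
    (n : ℕ → ℕ) (hn0 : 2 ≤ n 0)
    (hnrec : ∀ k : ℕ, n (k + 1) = ⌈(n k : ℝ) ^ γ⌉₊)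
    (a : ℕ → ℝ) (ha : ∀ k, 1 ≤ k → 0 < a k)
    (r : ℕ → ℝ) (hr : Tendsto r atTop (nhds 0))
    (hlog : ∀ k : ℕ, 1 ≤ k → Real.log (a k) = (1 - β + r k) * Real.log (n k)) :
    ∃ e : ℕ → ℝ, Tendsto e atTop (nhds 0) ∧
      ∀ k : ℕ, 1 ≤ k →
        ∑ i ∈ Finset.Icc 1 k, Real.log (a i) =
          (γ * (1 - β) / (γ - 1) + e k) * Real.log (n k) :=
  stmt_14_general γ β hγ n hn0 hnrec a r hr hlog
end

section
/- Let (b, d, ρ, ν) be a compact pointed metric space with a Borel probability measure, let d > 0, r_0 ∈ (0,1), and let φ: [0,1] → [0, d/2] be increasing with φ(r) → 0 as r → 0, such that for all r ∈ [0, r_0) and all x ∈ b, r^{d+φ(r)} ≤ ν(B(x,r)) ≤ r^{d-φ(r)}. Let r ∈ (0, r_0/3) and let (f_i)_{1≤i≤n} be a partition of b such that B(x_i, r/4) ⊆ f_i ⊆ B(x_i, r) for points x_1, …, x_n ∈ b. Then there exist functions ψ, φ' on [0, r_0/3] tending to 0 at 0 (depending only on φ and d) such that for all x ∈ b and all r'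 ∈ (0, r_0/3), the number of indices i with B(x, r') ∩ f_i ≠ ∅ is at most (r ∨ r')^{d + ψ(r ∨ r')} · r^{-d + φ'(r)}. -/
/-!
Each cell `f i` meeting `B(x, r')` carries the ball `B(x_i, r/4)`; these balls are disjoint
and lie in `B(x, r/4 + r + r') ⊆ B(x, 3 (r ∨ r'))`. Comparing the lower volume bound of the small
balls with the upper volume bound of the big one gives
`#{i | B(x, r') ∩ f i ≠ ∅} · (r/4)^{d + φ(r/4)} ≤ (3 (r ∨ r'))^{d - φ(3 (r ∨ r'))}`,
and the constants `3^d` and `4^{3d/2}` are absorbed into the exponent of `r` through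
`r ^ logb r C = C`, which costs `logb r C → 0`.
-/

open Filter Topology MeasureTheory Metric

section Packing

variable {α ι : Type*} [MeasurableSpace α] {μ : Measure α} [IsFiniteMeasure μ]

theorem card_mul_le_measureReal_of_pairwiseDisjoint {s : Finset ι} {g : ι → Set α} {U : Set α}
    {m : ℝ} (hmeas : ∀ i ∈ s, MeasurableSet (g i)) (hdisj : (s : Set ι).PairwiseDisjoint g)
    (hsub : ∀ i ∈ s, g i ⊆ U) (hm : ∀ i ∈ s, m ≤ μ.real (g i)) :
    s.card * m ≤ μ.real U :=
  calc s.card * m = ∑ _i ∈ s, m := by rw [Finset.sum_const, nsmul_eq_mul]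
    _ ≤ ∑ i ∈ s, μ.real (g i) := Finset.sum_le_sum hm
    _ = μ.real (⋃ i ∈ s, g i) := (measureReal_biUnion_finset hdisj hmeas).symm
    _ ≤ μ.real U := measureReal_mono (Set.iUnion₂_subset hsub)

variable {X : Type*} [PseudoMetricSpace X]

theorem ball_subset_ball_of_inter_nonempty {x c : X} {r r' : ℝ}
    (h : (ball x r' ∩ ball c r).Nonempty) (ρ : ℝ) :
    ball c ρ ⊆ ball x (ρ + r + r') := by
  obtain ⟨y, hxy, hcy⟩ := h
  refine ball_subset_ball' ?_
  have := dist_triangle c y x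
  rw [mem_ball] at hxy hcy
  rw [dist_comm] at hcy
  linarith

variable [MeasurableSpace X] [OpensMeasurableSpace X] [Fintype ι]
  (ν : Measure X) [IsFiniteMeasure ν]

theorem card_filter_inter_nonempty_mul_le {c : ι → X} {f : ι → Set X} {ρ r m : ℝ}
    (hf : ∀ i, ball (c i) ρ ⊆ f i ∧ f i ⊆ ball (c i) r)
    (hdisj : ∀ i j, i ≠ j → Disjoint (f i) (f j)) (hm : ∀ i, m ≤ ν.real (ball (c i) ρ))
    (x : X) (r' : ℝ) [DecidablePred fun i => (ball x r' ∩ f i).Nonempty] :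
    (Finset.univ.filter fun i => (ball x r' ∩ f i).Nonempty).card * m ≤
      ν.real (ball x (ρ + r + r')) := by
  refine card_mul_le_measureReal_of_pairwiseDisjoint (fun _ _ => measurableSet_ball)
    (fun i _ j _ hij => (hdisj i j hij).mono (hf i).1 (hf j).1) (fun i hi => ?_)
    (fun i _ => hm i)
  obtain ⟨y, hy⟩ := (Finset.mem_filter.mp hi).2
  exact ball_subset_ball_of_inter_nonempty ⟨y, hy.1, (hf i).2 hy.2⟩ ρ

end Packing

section Exponents

theorem rpow_le_rpow_mul_rpow {k s R e e' D : ℝ} (hk : 1 ≤ k) (hs : 0 < s) (hsR : s ≤ k * R)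
    (hR : k * R ≤ 1) (he' : 0 ≤ e') (he : e' ≤ e) (heD : e' ≤ D) :
    s ^ e ≤ k ^ D * R ^ e' := by
  have hR0 : 0 ≤ R := nonneg_of_mul_nonneg_right (hs.le.trans hsR) (by linarith)
  calc s ^ e ≤ s ^ e' := Real.rpow_le_rpow_of_exponent_ge hs (hsR.trans hR) he
    _ ≤ (k * R) ^ e' := Real.rpow_le_rpow hs.le hsR he'
    _ = k ^ e' * R ^ e' := Real.mul_rpow (by linarith) hR0
    _ ≤ k ^ D * R ^ e' := by gcongr

theorem rpow_le_rpow_mul_div_rpow {k r e e' D : ℝ} (hk : 1 ≤ k) (hr : 0 < r) (hrk : r ≤ k)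
    (he : e' ≤ e) (heD : e ≤ D) :
    r ^ e ≤ k ^ D * (r / k) ^ e' := by
  have hk0 : 0 < k := by linarith
  calc r ^ e = k ^ e * (r / k) ^ e := by
        rw [Real.div_rpow hr.le hk0.le, mul_div_cancel₀ _ (Real.rpow_pos_of_pos hk0 e).ne']
    _ ≤ k ^ D * (r / k) ^ e' :=
        mul_le_mul (Real.rpow_le_rpow_of_exponent_le hk heD)
          (Real.rpow_le_rpow_of_exponent_ge (by positivity) ((div_le_one hk0).2 hrk) he)
          (by positivity) (by positivity)

theorem rpow_neg_add_logb {r C : ℝ} (hr : 0 < r) (hr1 : r ≠ 1) (hC : 0 < C) (e : ℝ) :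
    r ^ (-e + Real.logb r C) = C / r ^ e := by
  rw [Real.rpow_add hr, Real.rpow_logb hr hr1 hC, Real.rpow_neg hr.le, inv_mul_eq_div]

theorem tendsto_logb_nhdsGT_zero (C : ℝ) :
    Tendsto (fun t => Real.logb t C) (𝓝[>] 0) (𝓝 0) :=
  Real.tendsto_log_nhdsGT_zero.const_div_atBot (Real.log C)

theorem tendsto_const_mul_nhdsGT_zero {k : ℝ} (hk : 0 < k) :
    Tendsto (k * ·) (𝓝[>] 0) (𝓝[>] 0) := by
  simpa only [comap_mulLeft_nhdsGT_zero hk] using tendsto_comap (f := (k * ·)) (x := 𝓝[>] 0)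

end Exponents

section VolumeBounds

variable {X ι : Type*} [PseudoMetricSpace X] [MeasurableSpace X] [OpensMeasurableSpace X]

/-- Hypothesis `(H_d)` of the paper, below the scale `r₀`. -/
def HasVolumeBounds (ν : Measure X) (d r₀ : ℝ) (φ : ℝ → ℝ) : Prop :=
  ∀ r : ℝ, 0 ≤ r → r < r₀ → ∀ x : X,
    r ^ (d + φ r) ≤ ν.real (ball x r) ∧ ν.real (ball x r) ≤ r ^ (d - φ r)

theorem card_filter_inter_nonempty_le [Fintype ι] (ν : Measure X) [IsFiniteMeasure ν]
    {d r₀ : ℝ} {φ : ℝ → ℝ} (hr₀ : r₀ ≤ 1) (hφmono : MonotoneOn φ (Set.Icc 0 1))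
    (hφrange : ∀ t ∈ Set.Icc (0 : ℝ) 1, φ t ∈ Set.Icc 0 (d / 2))
    (hν : HasVolumeBounds ν d r₀ φ) {r r' : ℝ} (hr : 0 < r) (hr3 : r < r₀ / 3)
    (hr' : 0 < r') (hr'3 : r' < r₀ / 3) {c : ι → X} {f : ι → Set X}
    (hf : ∀ i, ball (c i) (r / 4) ⊆ f i ∧ f i ⊆ ball (c i) r)
    (hdisj : ∀ i j, i ≠ j → Disjoint (f i) (f j)) (x : X)
    [DecidablePred fun i => (ball x r' ∩ f i).Nonempty] :
    ((Finset.univ.filter fun i => (ball x r' ∩ f i).Nonempty).card : ℝ) ≤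
      4 ^ (3 * d / 2) * (3 ^ d * max r r' ^ (d - φ (3 * max r r'))) / r ^ (d + φ r) := by
  set R := max r r'
  have hrR : r ≤ R := le_max_left r r'
  have hR3 : R < r₀ / 3 := max_lt hr3 hr'3
  set s := r / 4 + r + r' with hs
  have hs3R : s ≤ 3 * R := by linarith [le_max_right r r']
  have hmem : ∀ t, 0 ≤ t → t ≤ 3 * R → t ∈ Set.Icc (0 : ℝ) 1 := fun t ht htR =>
    ⟨ht, by linarith⟩
  have hφ3R := hφrange (3 * R) (hmem _ (by positivity) le_rfl)
  have hφr := hφrange r (hmem r hr.le (by linarith))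
  have hφs : φ s ≤ φ (3 * R) :=
    hφmono (hmem s (by positivity) hs3R) (hmem _ (by positivity) le_rfl) hs3R
  have hφr4 : φ (r / 4) ≤ φ r :=
    hφmono (hmem _ (by positivity) (by linarith)) (hmem r hr.le (by linarith)) (by linarith)
  have hpack := card_filter_inter_nonempty_mul_le ν hf hdisj
    (fun i => (hν (r / 4) (by positivity) (by linarith) (c i)).1) x r'
  have hupper : ν.real (ball x s) ≤ 3 ^ d * R ^ (d - φ (3 * R)) :=
    (hν s (by positivity) (by linarith) x).2.trans <| rpow_le_rpow_mul_rpow (by norm_num)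
      (by positivity) hs3R (by linarith) (by linarith [hφ3R.1, hφ3R.2]) (by linarith)
      (by linarith [hφ3R.1])
  have hlower : r ^ (d + φ r) ≤ 4 ^ (3 * d / 2) * (r / 4) ^ (d + φ (r / 4)) :=
    rpow_le_rpow_mul_div_rpow (by norm_num) hr (by linarith) (by linarith) (by linarith [hφr.2])
  rw [le_div_iff₀ (by positivity)]
  set N := ((Finset.univ.filter fun i => (ball x r' ∩ f i).Nonempty).card : ℝ)
  calc N * r ^ (d + φ r) ≤ N * (4 ^ (3 * d / 2) * (r / 4) ^ (d + φ (r / 4))) := by gcongr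
    _ = 4 ^ (3 * d / 2) * (N * (r / 4) ^ (d + φ (r / 4))) := by ring
    _ ≤ 4 ^ (3 * d / 2) * (3 ^ d * R ^ (d - φ (3 * R))) :=
      mul_le_mul_of_nonneg_left (hpack.trans hupper) (by positivity)

end VolumeBounds

open scoped Classical

theorem stmt_16_general {X : Type*} [MetricSpace X]
    [MeasurableSpace X] [BorelSpace X]
    (d r₀ : ℝ) (hr₀ : r₀ ∈ Set.Ioo (0 : ℝ) 1)
    (φ : ℝ → ℝ) (hφmono : MonotoneOn φ (Set.Icc 0 1))
    (hφrange : ∀ t ∈ Set.Icc (0 : ℝ) 1, φ t ∈ Set.Icc 0 (d / 2))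
    (hφ0 : Tendsto φ (nhdsWithin 0 (Set.Ioi 0)) (nhds 0)) :
    ∃ ψ φ' : ℝ → ℝ,
      Tendsto ψ (nhdsWithin 0 (Set.Ioi 0)) (nhds 0) ∧
      Tendsto φ' (nhdsWithin 0 (Set.Ioi 0)) (nhds 0) ∧
      ∀ (ν : MeasureTheory.Measure X), MeasureTheory.IsProbabilityMeasure ν →
        (∀ r : ℝ, 0 ≤ r → r < r₀ → ∀ x : X,
          r ^ (d + φ r) ≤ (ν (Metric.ball x r)).toReal ∧
          (ν (Metric.ball x r)).toReal ≤ r ^ (d - φ r)) →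
        ∀ r ∈ Set.Ioo (0 : ℝ) (r₀ / 3), ∀ (n : ℕ) (c : Fin n → X) (f : Fin n → Set X),
          (∀ i, Metric.ball (c i) (r / 4) ⊆ f i ∧ f i ⊆ Metric.ball (c i) r) →
          (∀ i j : Fin n, i ≠ j → Disjoint (f i) (f j)) →
          (⋃ i, f i) = Set.univ →
          ∀ (x : X), ∀ r' ∈ Set.Ioo (0 : ℝ) (r₀ / 3),
            ((Finset.univ.filter
                (fun i : Fin n => (Metric.ball x r' ∩ f i).Nonempty)).card : ℝ) ≤
              (max r r') ^ (d + ψ (max r r')) * r ^ (-d + φ' r) := by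
  set C : ℝ := 3 ^ d * 4 ^ (3 * d / 2)
  refine ⟨fun t => -φ (3 * t), fun t => -φ t + Real.logb t C,
    by simpa using (hφ0.comp (tendsto_const_mul_nhdsGT_zero three_pos)).neg,
    by simpa using hφ0.neg.add (tendsto_logb_nhdsGT_zero C), ?_⟩
  intro ν _ hν r ⟨hr, hr3⟩ n c f hf hdisj _ x r' ⟨hr', hr'3⟩
  calc _ ≤ 4 ^ (3 * d / 2) * (3 ^ d * max r r' ^ (d - φ (3 * max r r'))) / r ^ (d + φ r) :=
        card_filter_inter_nonempty_le ν hr₀.2.le hφmono hφrange hν hr hr3 hr' hr'3 hf hdisj x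
    _ = max r r' ^ (d - φ (3 * max r r')) * r ^ (-(d + φ r) + Real.logb r C) := by
        rw [rpow_neg_add_logb hr (by linarith [hr₀.2]) (by positivity)]
        ring
    _ = _ := by ring_nf

theorem stmt_16 {X : Type*} [MetricSpace X] [CompactSpace X]
    [MeasurableSpace X] [BorelSpace X]
    (d r₀ : ℝ) (hd : 0 < d) (hr₀ : r₀ ∈ Set.Ioo (0 : ℝ) 1)
    (φ : ℝ → ℝ) (hφmono : MonotoneOn φ (Set.Icc 0 1))
    (hφrange : ∀ t ∈ Set.Icc (0 : ℝ) 1, φ t ∈ Set.Icc 0 (d / 2))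
    (hφ0 : Tendsto φ (nhdsWithin 0 (Set.Ioi 0)) (nhds 0)) :
    ∃ ψ φ' : ℝ → ℝ,
      Tendsto ψ (nhdsWithin 0 (Set.Ioi 0)) (nhds 0) ∧
      Tendsto φ' (nhdsWithin 0 (Set.Ioi 0)) (nhds 0) ∧
      ∀ (ν : MeasureTheory.Measure X), MeasureTheory.IsProbabilityMeasure ν →
        (∀ r : ℝ, 0 ≤ r → r < r₀ → ∀ x : X,
          r ^ (d + φ r) ≤ (ν (Metric.ball x r)).toReal ∧
          (ν (Metric.ball x r)).toReal ≤ r ^ (d - φ r)) →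
        ∀ r ∈ Set.Ioo (0 : ℝ) (r₀ / 3), ∀ (n : ℕ) (c : Fin n → X) (f : Fin n → Set X),
          (∀ i, Metric.ball (c i) (r / 4) ⊆ f i ∧ f i ⊆ Metric.ball (c i) r) →
          (∀ i j : Fin n, i ≠ j → Disjoint (f i) (f j)) →
          (⋃ i, f i) = Set.univ →
          ∀ (x : X), ∀ r' ∈ Set.Ioo (0 : ℝ) (r₀ / 3),
            ((Finset.univ.filter
                (fun i : Fin n => (Metric.ball x r' ∩ f i).Nonempty)).card : ℝ) ≤
              (max r r') ^ (d + ψ (max r r')) * r ^ (-d + φ' r) :=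
  stmt_16_general d r₀ hr₀ φ hφmono hφrange hφ0
end
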